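/- Suppose f is m-strongly convex with M-Lipschitz gradient and iterates satisfy ∇f(x_{t+1}) − ∇f(x*) = −A^{1/2}(v_{t+1} − v*) − ε(x_{t+1} − x_t) for a symmetric PSD matrix A, with v_{t+1} − v_t = αA^{1/2}(x_{t+1} − x*). Then (2αmM/(m+M))‖x_{t+1}−x*‖² + (2α/(m+M))‖∇f(x_{t+1})−∇f(x*)‖² ≤ ‖v_t−v*‖² − ‖v_{t+1}−v_t‖² − ‖v_{t+1}−v*‖² + αε‖x_t−x*‖² − αε‖x_{t+1}−x_t‖² − αε‖x_{t+1}−x*‖². -/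

import Mathlib

/-!
Expanding `‖v₀ - v*‖²` and `‖x₀ - x*‖²` around `v₁` and `x₁`, the dual update and the symmetry
of `A^{1/2}` collapse the right-hand side to `2α⟪∇f x₁ - ∇f x*, x₁ - x*⟫`, so the claim is
Nesterov's coercivity inequality
`m M ‖x - y‖² + ‖∇f x - ∇f y‖² ≤ (m + M) ⟪∇f x - ∇f y, x - y⟫`.
The Hessian bounds give quadratic lower and upper models of `f` with curvatures `m` and `M`.
Subtracting `m/2 ‖·‖²` leaves a convex `h` with upper curvature `L = M - m`, and comparing the
two models of `h` at `x - t (∇h x - ∇h y)` gives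
`(2t - L t²) ‖∇h x - ∇h y‖² ≤ ⟪∇h x - ∇h y, x - y⟫` for every `t`, hence co-coercivity.
-/

open Matrix

/-- The positive semidefinite square root, as defined in Mathlib (Dec 2024). -/
noncomputable def Matrix.PosSemidef.sqrt {n : Type*} [Fintype n] [DecidableEq n]
    {A : Matrix n n ℝ} (hA : A.PosSemidef) : Matrix n n ℝ :=
  hA.1.eigenvectorUnitary.1 * diagonal ((√·) ∘ hA.1.eigenvalues) *
  (star hA.1.eigenvectorUnitary : Matrix n n ℝ)

open RealInnerProductSpace

lemma Matrix.PosSemidef.isHermitian_sqrt {n : Type*} [Fintype n] [DecidableEq n]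
    {A : Matrix n n ℝ} (hA : A.PosSemidef) : hA.sqrt.IsHermitian := by
  rw [PosSemidef.sqrt, star_eq_conjTranspose]
  exact isHermitian_mul_mul_conjTranspose _ (isHermitian_diagonal _)

lemma add_add_half_le_of_le_deriv2 {φ φ' φ'' : ℝ → ℝ} {c : ℝ}
    (hφ : ∀ t, HasDerivAt φ (φ' t) t) (hφ' : ∀ t, HasDerivAt φ' (φ'' t) t)
    (hc : ∀ t, c ≤ φ'' t) : φ 0 + φ' 0 + c / 2 ≤ φ 1 := by
  have hψ : ∀ t, HasDerivAt (fun s => φ s - c / 2 * s ^ 2) (φ' t - c * t) t := fun t =>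
    ((hφ t).fun_sub ((hasDerivAt_pow 2 t).const_mul (c / 2))).congr_deriv (by ring)
  have hψ' : ∀ t, HasDerivAt (fun s => φ' s - c * s) (φ'' t - c) t := fun t =>
    ((hφ' t).fun_sub ((hasDerivAt_id t).const_mul c)).congr_deriv (by ring)
  have hconvex : ConvexOn ℝ Set.univ (fun s => φ s - c / 2 * s ^ 2) :=
    convexOn_of_hasDerivWithinAt2_nonneg convex_univ
      (fun t _ => (hψ t).continuousAt.continuousWithinAt)
      (fun t _ => (hψ t).hasDerivWithinAt) (fun t _ => (hψ' t).hasDerivWithinAt)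
      (fun t _ => sub_nonneg.2 (hc t))
  have hslope := hconvex.le_slope_of_hasDerivAt (Set.mem_univ 0) (Set.mem_univ 1) one_pos (hψ 0)
  norm_num [slope_def_field] at hslope
  linarith

lemma le_mul_of_forall_quadratic_le {a b L : ℝ} (hL : 0 ≤ L)
    (h : ∀ t : ℝ, (2 * t - L * t ^ 2) * a ≤ b) : a ≤ L * b := by
  rcases hL.eq_or_lt with rfl | hL
  · by_contra! ha
    rw [zero_mul] at ha
    have hval : (2 * ((b + 1) / (2 * a)) - 0 * ((b + 1) / (2 * a)) ^ 2) * a = b + 1 := by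
      field_simp
      ring
    linarith [h ((b + 1) / (2 * a))]
  · have hinv := h L⁻¹
    field_simp at hinv
    linarith

section QuadraticBounds

variable {E : Type*} [NormedAddCommGroup E] [InnerProductSpace ℝ E]

lemma Differentiable.hasDerivAt_comp_add_smul {F : Type*} [NormedAddCommGroup F]
    [NormedSpace ℝ F] {f : E → F} (hf : Differentiable ℝ f) (x v : E) (t : ℝ) :
    HasDerivAt (fun s : ℝ => f (x + s • v)) (fderiv ℝ f (x + t • v) v) t := by
  have hline : HasDerivAt (fun s : ℝ => x + s • v) v t := by
    simpa using ((hasDerivAt_id t).smul_const v).const_add x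
  exact (hf _).hasFDerivAt.comp_hasDerivAt t hline

def HasQuadraticBounds (f : E → ℝ) (g : E → E) (m M : ℝ) : Prop :=
  ∀ x y, f x + ⟪g x, y - x⟫ + m / 2 * ‖y - x‖ ^ 2 ≤ f y ∧
    f y ≤ f x + ⟪g x, y - x⟫ + M / 2 * ‖y - x‖ ^ 2

lemma hasQuadraticBounds_gradient [CompleteSpace E] {f : E → ℝ} {m M : ℝ}
    (hf : ContDiff ℝ 2 f)
    (hH : ∀ x v : E, m * ‖v‖ ^ 2 ≤ iteratedFDeriv ℝ 2 f x ![v, v] ∧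
      iteratedFDeriv ℝ 2 f x ![v, v] ≤ M * ‖v‖ ^ 2) :
    HasQuadraticBounds f (gradient f) m M := by
  intro x y
  set v := y - x
  have hφ := (hf.differentiable two_ne_zero).hasDerivAt_comp_add_smul x v
  have hφ' (t : ℝ) : HasDerivAt (fun s => fderiv ℝ f (x + s • v) v)
      (fderiv ℝ (fderiv ℝ f) (x + t • v) v v) t :=
    (((hf.fderiv_right (m := 1) (by norm_num)).differentiable one_ne_zero).hasDerivAt_comp_add_smul
      x v t).clm_apply (hasDerivAt_const t v) |>.congr_deriv (by simp)
  have hess (z : E) : iteratedFDeriv ℝ 2 f z ![v, v] = fderiv ℝ (fderiv ℝ f) z v v := by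
    simp [iteratedFDeriv_two_apply]
  have lower := add_add_half_le_of_le_deriv2 hφ hφ' (c := m * ‖v‖ ^ 2)
    fun t => hess (x + t • v) ▸ (hH _ v).1
  have upper := add_add_half_le_of_le_deriv2 (fun t => (hφ t).fun_neg) (fun t => (hφ' t).fun_neg)
    (c := -(M * ‖v‖ ^ 2)) fun t => neg_le_neg (hess (x + t • v) ▸ (hH _ v).2)
  have hxv : x + v = y := add_sub_cancel x y
  simp only [zero_smul, one_smul, add_zero, hxv] at lower upper
  rw [inner_gradient_left]
  constructor <;> linarith

namespace HasQuadraticBounds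

variable {f : E → ℝ} {g : E → E} {m M L : ℝ}

lemma sub_half_mul_norm_sq (h : HasQuadraticBounds f g m M) (c : ℝ) :
    HasQuadraticBounds (fun x => f x - c / 2 * ‖x‖ ^ 2) (fun x => g x - c • x) (m - c) (M - c) := by
  intro x y
  have hsq : ‖y‖ ^ 2 = ‖x‖ ^ 2 + 2 * ⟪x, y - x⟫ + ‖y - x‖ ^ 2 := by
    rw [← norm_add_sq_real, add_sub_cancel]
  simp only [inner_sub_left, real_inner_smul_left]
  constructor
  · linear_combination (h x y).1 + c / 2 * hsq
  · linear_combination (h x y).2 - c / 2 * hsq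

lemma add_inner_add_le (h : HasQuadraticBounds f g 0 L) (x y : E) (t : ℝ) :
    f y + ⟪g y, x - y⟫ + (t - L * t ^ 2 / 2) * ‖g x - g y‖ ^ 2 ≤ f x := by
  set u := g x - g y
  have hlow := (h y (x - t • u)).1
  have hup := (h x (x - t • u)).2
  rw [sub_sub_cancel_left, norm_neg, norm_smul, inner_neg_right, real_inner_smul_right,
    mul_pow, Real.norm_eq_abs, sq_abs] at hup
  rw [sub_right_comm, inner_sub_right, real_inner_smul_right] at hlow
  have hu : ⟪g x, u⟫ - ⟪g y, u⟫ = ‖u‖ ^ 2 := by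
    rw [← inner_sub_left, real_inner_self_eq_norm_sq]
  linear_combination hlow + hup - t * hu

lemma norm_sub_sq_le_mul_inner (h : HasQuadraticBounds f g 0 L) (hL : 0 ≤ L) (x y : E) :
    ‖g x - g y‖ ^ 2 ≤ L * ⟪g x - g y, x - y⟫ := by
  refine le_mul_of_forall_quadratic_le hL fun t => ?_
  have hxy := h.add_inner_add_le x y t
  have hyx := h.add_inner_add_le y x t
  rw [norm_sub_rev] at hyx
  have hflip : ⟪g x - g y, x - y⟫ = -(⟪g y, x - y⟫ + ⟪g x, y - x⟫) := by
    rw [inner_sub_left, ← neg_sub x y, inner_neg_right]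
    ring
  linarith

lemma mul_norm_sub_sq_add_norm_sub_sq_le (h : HasQuadraticBounds f g m M) (hmM : m ≤ M)
    (x y : E) :
    m * M * ‖x - y‖ ^ 2 + ‖g x - g y‖ ^ 2 ≤ (m + M) * ⟪g x - g y, x - y⟫ := by
  have hshifted := (sub_self m ▸ h.sub_half_mul_norm_sq m).norm_sub_sq_le_mul_inner
    (sub_nonneg.2 hmM) x y
  have hshift : g x - m • x - (g y - m • y) = (g x - g y) - m • (x - y) := by
    rw [smul_sub]
    abel
  rw [hshift] at hshifted
  generalize g x - g y = Δ at hshifted ⊢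
  generalize x - y = d at hshifted ⊢
  rw [norm_sub_sq_real, inner_sub_left, real_inner_smul_right, real_inner_smul_left, norm_smul,
    mul_pow, Real.norm_eq_abs, sq_abs, real_inner_self_eq_norm_sq] at hshifted
  linear_combination hshifted

end HasQuadraticBounds

end QuadraticBounds

lemma pmm_energy_identity {E : Type*} [NormedAddCommGroup E] [InnerProductSpace ℝ E]
    {S : E →ₗ[ℝ] E} (hS : S.IsSymmetric) {α ε : ℝ} {g x0 x1 xs v0 v1 vs : E}
    (hopt : g = -S (v1 - vs) - ε • (x1 - x0)) (hdual : v1 - v0 = α • S (x1 - xs)) :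
    ‖v0 - vs‖ ^ 2 - ‖v1 - v0‖ ^ 2 - ‖v1 - vs‖ ^ 2 +
      α * ε * ‖x0 - xs‖ ^ 2 - α * ε * ‖x1 - x0‖ ^ 2 - α * ε * ‖x1 - xs‖ ^ 2 =
    2 * α * ⟪g, x1 - xs⟫ := by
  have hv : v0 - vs = (v1 - vs) - (v1 - v0) := by abel
  have hx : x0 - xs = (x1 - xs) - (x1 - x0) := by abel
  have hSv : S (v1 - vs) = -(g + ε • (x1 - x0)) := by
    rw [hopt]
    abel
  have hcross : ⟪v1 - vs, v1 - v0⟫ = -α * (⟪g, x1 - xs⟫ + ε * ⟪x1 - x0, x1 - xs⟫) := by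
    rw [hdual, real_inner_smul_right, ← hS, hSv, inner_neg_left, inner_add_left,
      real_inner_smul_left]
    ring
  rw [hv, hx, norm_sub_sq_real (v1 - vs), norm_sub_sq_real (x1 - xs), hcross,
    real_inner_comm (x1 - x0) (x1 - xs)]
  ring

theorem pmm_descent_inequality_general {N : ℕ} (f : EuclideanSpace ℝ (Fin N) → ℝ)
    (m M α ε : ℝ) (hm : 0 < m) (hmM : m ≤ M) (hα : 0 < α)
    (hf : ContDiff ℝ 2 f)
    (hHess : ∀ x v : EuclideanSpace ℝ (Fin N),
      m * ‖v‖ ^ 2 ≤ iteratedFDeriv ℝ 2 f x ![v, v] ∧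
      iteratedFDeriv ℝ 2 f x ![v, v] ≤ M * ‖v‖ ^ 2)
    (A : Matrix (Fin N) (Fin N) ℝ) (hA : A.PosSemidef)
    (x0 x1 xs v0 v1 vs : EuclideanSpace ℝ (Fin N))
    (hopt : gradient f x1 - gradient f xs =
      -(Matrix.toEuclideanLin hA.sqrt (v1 - vs)) - ε • (x1 - x0))
    (hdual : v1 - v0 = α • Matrix.toEuclideanLin hA.sqrt (x1 - xs)) :
    2 * α * m * M / (m + M) * ‖x1 - xs‖ ^ 2 +
      2 * α / (m + M) * ‖gradient f x1 - gradient f xs‖ ^ 2 ≤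
    ‖v0 - vs‖ ^ 2 - ‖v1 - v0‖ ^ 2 - ‖v1 - vs‖ ^ 2 +
      α * ε * ‖x0 - xs‖ ^ 2 - α * ε * ‖x1 - x0‖ ^ 2 - α * ε * ‖x1 - xs‖ ^ 2 := by
  have hcoercive := (hasQuadraticBounds_gradient hf hHess).mul_norm_sub_sq_add_norm_sub_sq_le
    hmM x1 xs
  rw [pmm_energy_identity (Matrix.isSymmetric_toEuclideanLin_iff.2 hA.isHermitian_sqrt) hopt
    hdual]
  have hsum : 0 < m + M := by linarith
  calc _ = 2 * α / (m + M) * (m * M * ‖x1 - xs‖ ^ 2 + ‖gradient f x1 - gradient f xs‖ ^ 2) := by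
        ring
    _ ≤ 2 * α / (m + M) * ((m + M) * ⟪gradient f x1 - gradient f xs, x1 - xs⟫) := by gcongr
    _ = 2 * α * ⟪gradient f x1 - gradient f xs, x1 - xs⟫ := by field_simp

theorem pmm_descent_inequality {N : ℕ} (f : EuclideanSpace ℝ (Fin N) → ℝ)
    (m M α ε : ℝ) (hm : 0 < m) (hmM : m ≤ M) (hα : 0 < α) (hε : 0 < ε)
    (hf : ContDiff ℝ 2 f)
    (hHess : ∀ x v : EuclideanSpace ℝ (Fin N),
      m * ‖v‖ ^ 2 ≤ iteratedFDeriv ℝ 2 f x ![v, v] ∧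
      iteratedFDeriv ℝ 2 f x ![v, v] ≤ M * ‖v‖ ^ 2)
    (A : Matrix (Fin N) (Fin N) ℝ) (hA : A.PosSemidef)
    (x0 x1 xs v0 v1 vs : EuclideanSpace ℝ (Fin N))
    (hopt : gradient f x1 - gradient f xs =
      -(Matrix.toEuclideanLin hA.sqrt (v1 - vs)) - ε • (x1 - x0))
    (hdual : v1 - v0 = α • Matrix.toEuclideanLin hA.sqrt (x1 - xs)) :
    2 * α * m * M / (m + M) * ‖x1 - xs‖ ^ 2 +
      2 * α / (m + M) * ‖gradient f x1 - gradient f xs‖ ^ 2 ≤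
    ‖v0 - vs‖ ^ 2 - ‖v1 - v0‖ ^ 2 - ‖v1 - vs‖ ^ 2 +
      α * ε * ‖x0 - xs‖ ^ 2 - α * ε * ‖x1 - x0‖ ^ 2 - α * ε * ‖x1 - xs‖ ^ 2 :=
  pmm_descent_inequality_general f m M α ε hm hmM hα hf hHess A hA x0 x1 xs v0 v1 vs hopt hdual
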